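/- Let A be symmetric positive definite with smallest eigenvalue λ_A > 0, step sizes η_p = η p^{-α} with 1/2 < α < 1, η λ_max(A) ≤ 1, and S_p^n = ∑_{k=p+1}^{n} ∏_{j=p+1}^{k}(I - η_j A). Then ∑_{p=1}^{n} ‖I + S_p^n‖² η_p² ≤ C n for a constant C independent of n. -/

import Mathlib

open Finset Real Matrix
open scoped Matrix.Norms.L2Operator

/-!
Peeling off the first factor gives `S p n = (1 + S (p+1) n) * (1 - η_{p+1} A)`, and for symmetric
`A` with spectrum in `[λ_A, λ_max]` the factor has norm at most `1 - c (p+1)^(-α)`, `c = η λ_A`.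
So `s p = ‖S p n‖` obeys the backward recursion `s p ≤ (1 - c (p+1)^(-α)) (1 + s (p+1))`, with
`s p = 0` for `p ≥ n`. The weight `b p = (2/c) (p+1+L)^α` is a supersolution of this recursion
as soon as its increments, of size `α (p+1+L)^(α-1)`, stay below `c/2`; hence `s p = O(p^α)`
uniformly in `n`, and every term `‖1 + S p n‖² η_p²` is bounded.
-/

open RCLike in
theorem ContinuousLinearMap.opNorm_le_of_abs_re_inner_self_le {𝕜 E : Type*} [RCLike 𝕜]
    [NormedAddCommGroup E] [InnerProductSpace 𝕜 E] {T : E →L[𝕜] E}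
    (hT : (T : E →ₗ[𝕜] E).IsSymmetric) {β : ℝ} (hβ : 0 ≤ β)
    (h : ∀ x, |re (inner 𝕜 (T x) x)| ≤ β * ‖x‖ ^ 2) : ‖T‖ ≤ β := by
  rw [T.norm_eq_iSup_rayleighQuotient hT]
  refine ciSup_le fun x => ?_
  rcases eq_or_ne x 0 with rfl | hx
  · simpa using hβ
  · rw [rayleighQuotient, reApplyInnerSelf_apply, abs_div, abs_sq, div_le_iff₀ (by positivity)]
    exact h x

theorem Matrix.IsHermitian.l2_opNorm_le_of_abs_dotProduct_le {n : Type*} [Fintype n]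
    [DecidableEq n] {M : Matrix n n ℝ} (hM : M.IsHermitian) {β : ℝ} (hβ : 0 ≤ β)
    (h : ∀ v, |v ⬝ᵥ M *ᵥ v| ≤ β * (v ⬝ᵥ v)) : ‖M‖ ≤ β := by
  rw [← l2_opNorm_toEuclideanCLM]
  refine ContinuousLinearMap.opNorm_le_of_abs_re_inner_self_le
    (by rwa [coe_toEuclideanCLM_eq_toEuclideanLin, isSymmetric_toEuclideanLin_iff]) hβ
    fun x => ?_
  rw [RCLike.re_to_real, real_inner_comm, inner_toEuclideanCLM, ← real_inner_self_eq_norm_sq,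
    EuclideanSpace.inner_eq_star_dotProduct]
  simpa using h x.ofLp

theorem Matrix.IsHermitian.l2_opNorm_one_sub_smul_le {n : Type*} [Fintype n] [DecidableEq n]
    {A : Matrix n n ℝ} (hA : A.IsHermitian) {lam lamMax t : ℝ}
    (hmin : ∀ x, lam * (x ⬝ᵥ x) ≤ x ⬝ᵥ A *ᵥ x) (hmax : ∀ x, x ⬝ᵥ A *ᵥ x ≤ lamMax * (x ⬝ᵥ x))
    (ht : 0 ≤ t) (htmax : t * lamMax ≤ 1) (htlam : t * lam ≤ 1) :
    ‖1 - t • A‖ ≤ 1 - t * lam := by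
  refine (isHermitian_one.sub (hA.smul (IsSelfAdjoint.all t))).l2_opNorm_le_of_abs_dotProduct_le
    (by linarith) fun v => ?_
  have hv : 0 ≤ v ⬝ᵥ v := dotProduct_self_star_nonneg v
  rw [sub_mulVec, one_mulVec, smul_mulVec, dotProduct_sub, dotProduct_smul, smul_eq_mul, abs_le]
  constructor
  · nlinarith [mul_le_mul_of_nonneg_left (hmax v) ht, mul_le_mul_of_nonneg_right htmax hv]
  · nlinarith [mul_le_mul_of_nonneg_left (hmin v) ht]

section Transition

variable {R : Type*} {Y : ℕ → ℕ → R} {F : ℕ → R}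

theorem transition_eq_transition_succ_mul [Ring R] (hY0 : ∀ p, Y p p = 1)
    (hYrec : ∀ p k, p ≤ k → Y p (k + 1) = F (k + 1) * Y p k) {p k : ℕ} (hpk : p < k) :
    Y p k = Y (p + 1) k * F (p + 1) := by
  induction k, hpk using Nat.le_induction with
  | base => rw [hYrec p p le_rfl, hY0, hY0, mul_one, one_mul]
  | succ k hk ih => rw [hYrec p k (by omega), ih, hYrec (p + 1) k hk, mul_assoc]

theorem sum_transition_eq_one_add_mul [Ring R] (hY0 : ∀ p, Y p p = 1)
    (hYrec : ∀ p k, p ≤ k → Y p (k + 1) = F (k + 1) * Y p k) {p n : ℕ} (hpn : p < n) :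
    ∑ k ∈ Icc (p + 1) n, Y p k = (1 + ∑ k ∈ Icc (p + 1 + 1) n, Y (p + 1) k) * F (p + 1) := by
  rw [← insert_Icc_add_one_left_eq_Icc (Nat.succ_le_of_lt hpn), sum_insert (by simp), add_mul,
    sum_mul, one_mul, transition_eq_transition_succ_mul hY0 hYrec p.lt_succ_self, hY0, one_mul]
  refine congrArg _ (sum_congr rfl fun k hk => ?_)
  exact transition_eq_transition_succ_mul hY0 hYrec (by simp at hk; omega)

theorem norm_sum_transition_le [NormedRing R] [NormOneClass R] (hY0 : ∀ p, Y p p = 1)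
    (hYrec : ∀ p k, p ≤ k → Y p (k + 1) = F (k + 1) * Y p k) {p n : ℕ} (hpn : p < n) :
    ‖∑ k ∈ Icc (p + 1) n, Y p k‖ ≤
      ‖F (p + 1)‖ * (1 + ‖∑ k ∈ Icc (p + 1 + 1) n, Y (p + 1) k‖) := by
  rw [sum_transition_eq_one_add_mul hY0 hYrec hpn, mul_comm ‖F _‖]
  refine (norm_mul_le _ _).trans ?_
  gcongr
  exact (norm_add_le _ _).trans_eq (by rw [norm_one])

end Transition

theorem le_of_le_mul_one_add_succ {s r b : ℕ → ℝ} {n : ℕ} (hr : ∀ p, 0 ≤ r p)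
    (hb : ∀ p, r p * (1 + b (p + 1)) ≤ b p) (hbase : ∀ p, n ≤ p → s p ≤ b p)
    (hs : ∀ p < n, s p ≤ r p * (1 + s (p + 1))) (p : ℕ) : s p ≤ b p := by
  suffices ∀ m p, n ≤ p + m → s p ≤ b p from this n p (by omega)
  intro m
  induction m with
  | zero => exact hbase
  | succ m ih =>
    intro p hp
    rcases le_or_gt n p with hnp | hpn
    · exact hbase p hnp
    calc s p ≤ r p * (1 + s (p + 1)) := hs p hpn
      _ ≤ r p * (1 + b (p + 1)) := by
        gcongr
        · exact hr p
        · exact ih (p + 1) (by omega)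
      _ ≤ b p := hb p

theorem Real.rpow_add_one_le {x α : ℝ} (hx : 0 < x) (hα0 : 0 ≤ α) (hα1 : α ≤ 1) :
    (x + 1) ^ α ≤ x ^ α + α * x ^ (α - 1) := by
  have hx' : x + 1 = x * (1 + x⁻¹) := by field_simp
  calc (x + 1) ^ α = x ^ α * (1 + x⁻¹) ^ α := by rw [hx', mul_rpow hx.le (by positivity)]
    _ ≤ x ^ α * (1 + α * x⁻¹) := by
        gcongr
        exact rpow_one_add_le_one_add_mul_self (by linarith [inv_pos.2 hx]) hα0 hα1
    _ = x ^ α + α * x ^ (α - 1) := by rw [rpow_sub_one hx.ne']; ring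

theorem exists_mul_rpow_sub_one_le {α ε : ℝ} (hα : α < 1) (hε : 0 < ε) :
    ∃ L ≥ 1, ∀ y ≥ L, α * y ^ (α - 1) ≤ ε := by
  have h : Filter.Tendsto (fun y : ℝ => α * y ^ (α - 1)) Filter.atTop (nhds (α * 0)) := by
    have := (tendsto_rpow_neg_atTop (y := 1 - α) (by linarith)).const_mul α
    simpa only [neg_sub] using this
  obtain ⟨L, hL⟩ := Filter.eventually_atTop.1
    ((h.eventually_lt_const (by simpa using hε)).and (Filter.eventually_ge_atTop 1))
  exact ⟨max L 1, le_max_right _ _, fun y hy => (hL y (le_of_max_le_left hy)).1.le⟩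

theorem exists_rpow_supersolution {c α : ℝ} (hc : 0 < c) (hα0 : 0 < α) (hα1 : α < 1) :
    ∃ L ≥ 0, ∀ x ≥ 1,
      (1 - c * x ^ (-α)) * (1 + 2 / c * (x + 1 + L) ^ α) ≤ 2 / c * (x + L) ^ α := by
  obtain ⟨L, hL1, hL⟩ := exists_mul_rpow_sub_one_le hα1 (half_pos hc)
  refine ⟨L, by linarith, fun x hx => ?_⟩
  have hx0 : 0 < x := by linarith
  have hgrowth : (x + 1 + L) ^ α ≤ (x + L) ^ α + c / 2 := by
    rw [add_right_comm]
    exact (rpow_add_one_le (by linarith) hα0.le hα1.le).trans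
      (by gcongr; exact hL _ (by linarith))
  have hratio : 1 ≤ x ^ (-α) * (x + 1 + L) ^ α := by
    rw [rpow_neg hx0.le, inv_mul_eq_div, one_le_div (by positivity)]
    gcongr
    linarith
  have hpos : 0 ≤ c * x ^ (-α) := by positivity
  have hcM : c * (2 / c) = 2 := by field_simp
  calc (1 - c * x ^ (-α)) * (1 + 2 / c * (x + 1 + L) ^ α)
      = 1 - c * x ^ (-α) + 2 / c * (x + 1 + L) ^ α
        - c * (2 / c) * (x ^ (-α) * (x + 1 + L) ^ α) := by ring
    _ ≤ 1 + 2 / c * (x + 1 + L) ^ α - 2 := by rw [hcM]; linarith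
    _ ≤ 2 / c * (x + L) ^ α := by
        nlinarith [mul_le_mul_of_nonneg_left hgrowth (by positivity : (0:ℝ) ≤ 2 / c)]

theorem norm_one_add_mul_rpow_neg_le {R : Type*} [SeminormedRing R] [NormOneClass R] {x : R}
    {p α η L M : ℝ} (hp : 1 ≤ p) (hα : 0 ≤ α) (hη : 0 ≤ η) (hL : 0 ≤ L) (hM : 0 ≤ M)
    (hx : ‖x‖ ≤ M * (p + 1 + L) ^ α) :
    ‖1 + x‖ * (η * p ^ (-α)) ≤ η * (1 + M * (2 + L) ^ α) := by
  have hp0 : 0 < p := by linarith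
  have hratio : (p + 1 + L) ^ α * p ^ (-α) ≤ (2 + L) ^ α := by
    rw [rpow_neg hp0.le, ← div_eq_mul_inv, ← div_rpow (by positivity) hp0.le]
    gcongr
    rw [div_le_iff₀ hp0]
    nlinarith
  have hneg : p ^ (-α) ≤ 1 := rpow_le_one_of_one_le_of_nonpos hp (by linarith)
  have hx1 : ‖1 + x‖ ≤ 1 + M * (p + 1 + L) ^ α :=
    (norm_add_le _ _).trans (by rw [norm_one]; gcongr)
  calc ‖1 + x‖ * (η * p ^ (-α)) ≤ (1 + M * (p + 1 + L) ^ α) * p ^ (-α) * η := by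
        rw [mul_left_comm, mul_comm]
        gcongr
    _ ≤ η * (1 + M * (2 + L) ^ α) := by
        rw [mul_comm η]
        gcongr
        nlinarith [mul_le_mul_of_nonneg_left hratio hM]

theorem sum_sq_opNorm_one_add_S_mul_step_le
    (d : ℕ) (A : Matrix (Fin d) (Fin d) ℝ) (hA : A.PosDef)
    (lamA lamMax η α : ℝ) (hlamA : 0 < lamA)
    (hmin : ∀ x : Fin d → ℝ, lamA * (x ⬝ᵥ x) ≤ x ⬝ᵥ A.mulVec x)
    (hmax : ∀ x : Fin d → ℝ, x ⬝ᵥ A.mulVec x ≤ lamMax * (x ⬝ᵥ x))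
    (hη : 0 < η) (hα1 : 1/2 < α) (hα2 : α < 1)
    (hstep : η * lamMax ≤ 1)
    (ηp : ℕ → ℝ) (hηp : ∀ p : ℕ, ηp p = η * (p:ℝ) ^ (-α))
    (Y : ℕ → ℕ → Matrix (Fin d) (Fin d) ℝ)
    (hY0 : ∀ p : ℕ, Y p p = 1)
    (hYrec : ∀ p k : ℕ, p ≤ k → Y p (k+1) = (1 - ηp (k+1) • A) * Y p k)
    (S : ℕ → ℕ → Matrix (Fin d) (Fin d) ℝ)
    (hS : ∀ p n : ℕ, S p n = ∑ k ∈ Finset.Icc (p+1) n, Y p k) :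
    ∃ C : ℝ, 0 < C ∧ ∀ n : ℕ,
      ∑ p ∈ Finset.Icc 1 n, ‖(1 : Matrix (Fin d) (Fin d) ℝ) + S p n‖^2 * (ηp p)^2 ≤
        C * n := by
  obtain rfl | hd := Nat.eq_zero_or_pos d
  · exact ⟨1, one_pos, fun n => by simp [Subsingleton.elim _ (0 : Matrix (Fin 0) (Fin 0) ℝ)]⟩
  have : NeZero d := ⟨hd.ne'⟩
  have hα : 0 < α := by linarith
  have hlam : lamA ≤ lamMax := by
    have h := (hmin 1).trans (hmax 1)
    exact le_of_mul_le_mul_right h (by simp [hd])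
  set c := η * lamA
  have hc : 0 < c := mul_pos hη hlamA
  have hcontract (p : ℕ) : ‖1 - ηp (p + 1) • A‖ ≤ 1 - c * ((p : ℝ) + 1) ^ (-α) := by
    have hq : ((p : ℝ) + 1) ^ (-α) ≤ 1 :=
      rpow_le_one_of_one_le_of_nonpos (by linarith [p.cast_nonneg (α := ℝ)]) (by linarith)
    have hq0 : 0 ≤ ((p : ℝ) + 1) ^ (-α) := by positivity
    rw [hηp, Nat.cast_succ]
    exact (hA.isHermitian.l2_opNorm_one_sub_smul_le hmin hmax (by positivity) (by nlinarith)
      (by nlinarith)).trans_eq (by ring)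
  obtain ⟨L, hL, hweight⟩ := exists_rpow_supersolution hc hα hα2
  have hS_le (n p : ℕ) : ‖S p n‖ ≤ 2 / c * ((p : ℝ) + 1 + L) ^ α := by
    refine le_of_le_mul_one_add_succ (s := fun p => ‖S p n‖)
      (b := fun p : ℕ => 2 / c * ((p : ℝ) + 1 + L) ^ α) (r := fun p => ‖1 - ηp (p + 1) • A‖)
      (n := n) (fun _ => norm_nonneg _) (fun p => ?_) (fun p hp => ?_) (fun p hp => ?_) p
    · refine (mul_le_mul_of_nonneg_right (hcontract p) (by positivity)).trans ?_
      simpa [add_assoc] using hweight ((p : ℝ) + 1) (by linarith [p.cast_nonneg (α := ℝ)])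
    · rw [hS, Icc_eq_empty (by omega), sum_empty, norm_zero]
      positivity
    · simp only [hS]
      exact norm_sum_transition_le (F := fun k => 1 - ηp k • A) hY0 hYrec hp
  refine ⟨(η * (1 + 2 / c * (2 + L) ^ α)) ^ 2, by positivity, fun n => ?_⟩
  calc ∑ p ∈ Icc 1 n, ‖(1 : Matrix (Fin d) (Fin d) ℝ) + S p n‖ ^ 2 * ηp p ^ 2
      ≤ ∑ p ∈ Icc 1 n, (η * (1 + 2 / c * (2 + L) ^ α)) ^ 2 := by
        refine sum_le_sum fun p hp => ?_
        rw [← mul_pow, hηp]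
        exact pow_le_pow_left₀ (by positivity) (norm_one_add_mul_rpow_neg_le
          (by exact_mod_cast (mem_Icc.1 hp).1) hα.le hη.le hL (by positivity) (hS_le n p)) 2
    _ = (η * (1 + 2 / c * (2 + L) ^ α)) ^ 2 * n := by simp [mul_comm]
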